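/- In the Loidreau–Overbeck setting, assume rk_F(λ_(n−t−k)(E)_a⃗) = t, let h = (h^(1) | ⋯ | h^(ℓ)) ∈ F^n be a nonzero vector with L·hᵀ = 0, let T^(i) ∈ GF(q)^(n_i×n_i) be invertible matrices such that the first t_i entries of h^(i)·T^(i) are zero, and set D^(i) := ((T^(i))^(−1))ᵀ, β̃^(i) := β^(i)·D^(i) and R̃^(i) := R^(i)·D^(i). Then for every row index j = 1, …, s, every block i = 1, …, ℓ and every position μ = t_i + 1, …, n_i, the (j, μ)-entry of R̃^(i) equals Σ_(u=0)^(k−1) M_(j,u)·D_(a_i)^u(β̃^(i)_μ); moreover, the j-th row of M is the unique vector v ∈ F^k satisfying Σ_(u=0)^(k−1) v_u·D_(a_i)^u(β̃^(i)_μ) = R̃^(i)_(j,μ) for all such i and μ, so each message polynomial can be uniquely reconstructed from the received word by interpolation. -/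

import Mathlib

/-!
The kernel equations of `L` split into `λ_{n-t-1}(β) h = 0` and `λ_{n-t-k}(E) h = 0`: the rows of
`λ_{n-t-k}(C(M))` are σ-twisted combinations of rows of `λ_{n-t-1}(β)`. Everything else rests on
the Lam–Leroy root bound: a nonzero σ-polynomial with `d` coefficients, evaluated at the operators
`D_{a_i}` for pairwise non-conjugate `a_i`, has root spaces of total `GF(q)`-dimension `< d`
(right division by `X - c` at a root `b₀` lowers the degree and kills at most a line, and only
at the class of `a_{i₀}`). Hence Moore matrices on blockwise independent points have independent
rows, and the first kernel equation forces `wt_ΣR(h) ≥ n - t`.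

Writing each error block as `E^(i) = B^(i) C^(i)` with `C^(i)` over `GF(q)` of full row rank
`t_i`, the rank hypothesis makes `λ(B)` injective, so the rows of `C^(i)` are `GF(q)`-linear
relations among the entries of `h^(i)`. Counting dimensions, they span all such relations, as do
the first `t_i` columns of `T^(i)`; so `E^(i) ((T^(i))⁻¹)ᵀ` vanishes from column `t_i` on, where
`R̃` therefore agrees with the codeword of `M` at `β̃`. Uniqueness is again independence of the
Moore rows on the remaining `n - t ≥ k` points.
-/

namespace Stmt19

/-- `genNorm σ a i = σ^(i-1)(a) ⋯ σ(a) · a`, the generalized power function `N_i(a)`. -/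
def genNorm {F : Type} [Field F] (σ : F ≃+* F) (a : F) : ℕ → F
  | 0 => 1
  | i + 1 => (⇑σ)^[i] a * genNorm σ a i

/-- Generalized operator `D_a^i(b) = σ^i(b) · N_i(a)` for `i ∈ ℕ`. -/
def opev {F : Type} [Field F] (σ : F ≃+* F) (a b : F) (i : ℕ) : F :=
  (⇑σ)^[i] b * genNorm σ a i

/-- `b` is σ-conjugate to `a`, i.e. `b = σ(c)·a·c⁻¹` for some nonzero `c`. -/
def SConj {F : Type} [Field F] (σ : F ≃+* F) (a b : F) : Prop :=
  ∃ c : F, c ≠ 0 ∧ b = σ c * a * c⁻¹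

/-- σ-generalized Moore matrix `λ_d(x)_a⃗` w.r.t. the length partition `nn`:
its row `r` applies `D_{a_i}^r` entrywise to the `i`-th block of `x`. -/
def moore {F : Type} [Field F] (σ : F ≃+* F) {ℓ : ℕ} (nn : Fin ℓ → ℕ) (aa : Fin ℓ → F)
    (d : ℕ) (x : (Σ i : Fin ℓ, Fin (nn i)) → F) :
    Matrix (Fin d) (Σ i : Fin ℓ, Fin (nn i)) F :=
  Matrix.of fun r p => opev σ (aa p.1) (x p) (r : ℕ)

/-- `λ_d(X)_a⃗` for a matrix `X`: the stack of `λ_d(x_j)_a⃗` over the rows of `X`. -/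
def mooreMat {F : Type} [Field F] (σ : F ≃+* F) {ℓ : ℕ} (nn : Fin ℓ → ℕ) (aa : Fin ℓ → F)
    {s : ℕ} (d : ℕ) (X : Matrix (Fin s) (Σ i : Fin ℓ, Fin (nn i)) F) :
    Matrix (Fin s × Fin d) (Σ i : Fin ℓ, Fin (nn i)) F :=
  Matrix.of fun r p => opev σ (aa p.1) (X r.1 p) (r.2 : ℕ)

/-- `rk_q` of a vector: the `K`-dimension of the `K`-span of its entries. -/
noncomputable def rkq (K : Type) [Field K] {F : Type} [Field F] [Algebra K F] {ι : Type}
    (v : ι → F) : ℕ :=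
  Module.finrank K (Submodule.span K (Set.range v))

/-- `rk_q` of a matrix: the `K`-dimension of the `K`-span of its columns. -/
noncomputable def rkqMat (K : Type) [Field K] {F : Type} [Field F] [Algebra K F]
    {s : ℕ} {ι : Type} (X : Matrix (Fin s) ι F) : ℕ :=
  Module.finrank K (Submodule.span K (Set.range fun j : ι => fun r : Fin s => X r j))

/-- Sum-rank weight of a blockwise vector. -/
noncomputable def wtV (K : Type) [Field K] {F : Type} [Field F] [Algebra K F] {ℓ : ℕ}
    (nn : Fin ℓ → ℕ) (x : (Σ i : Fin ℓ, Fin (nn i)) → F) : ℕ :=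
  ∑ i, rkq K fun μ : Fin (nn i) => x ⟨i, μ⟩

/-- Sum-rank weight of a blockwise matrix. -/
noncomputable def wtM (K : Type) [Field K] {F : Type} [Field F] [Algebra K F] {s ℓ : ℕ}
    (nn : Fin ℓ → ℕ) (X : Matrix (Fin s) (Σ i : Fin ℓ, Fin (nn i)) F) : ℕ :=
  ∑ i, rkqMat K (Matrix.of fun (r : Fin s) (μ : Fin (nn i)) => X r ⟨i, μ⟩)

/-- Codeword `C(M) = M · λ_k(β)_a⃗` of the `s`-interleaved linearized Reed–Solomon code. -/
def codeword {F : Type} [Field F] (σ : F ≃+* F) {ℓ : ℕ} (nn : Fin ℓ → ℕ) (aa : Fin ℓ → F)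
    (β : (Σ i : Fin ℓ, Fin (nn i)) → F) {s : ℕ} (k : ℕ) (M : Matrix (Fin s) (Fin k) F) :
    Matrix (Fin s) (Σ i : Fin ℓ, Fin (nn i)) F :=
  M * moore σ nn aa k β

/-- Loidreau–Overbeck decoding matrix: the stack of `λ_{n-t-1}(β)_a⃗` and
`λ_{n-t-k}(r_j)_a⃗` for the rows `r_j` of `R`. -/
def LOmat {F : Type} [Field F] (σ : F ≃+* F) {ℓ : ℕ} (nn : Fin ℓ → ℕ) (aa : Fin ℓ → F)
    (β : (Σ i : Fin ℓ, Fin (nn i)) → F) {s : ℕ}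
    (R : Matrix (Fin s) (Σ i : Fin ℓ, Fin (nn i)) F) (n t k : ℕ) :
    Matrix (Fin (n - t - 1) ⊕ Fin s × Fin (n - t - k)) (Σ i : Fin ℓ, Fin (nn i)) F :=
  Matrix.of fun r p =>
    match r with
    | Sum.inl u => opev σ (aa p.1) (β p) (u : ℕ)
    | Sum.inr ju => opev σ (aa p.1) (R ju.1 p) (ju.2 : ℕ)

open Finset Matrix Module

section LinearAlgebra

lemma finrank_le_finrank_map_add_finrank_ker {K V V' : Type*} [Field K]
    [AddCommGroup V] [Module K V] [FiniteDimensional K V] [AddCommGroup V'] [Module K V']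
    (g : V →ₗ[K] V') (W : Submodule K V) :
    finrank K W ≤ finrank K (W.map g) + finrank K (LinearMap.ker g) := by
  have hrn := LinearMap.finrank_range_add_finrank_ker (g.domRestrict W)
  rw [LinearMap.range_domRestrict, LinearMap.ker_domRestrict] at hrn
  have hker : finrank K ((LinearMap.ker g).comap W.subtype) ≤ finrank K (LinearMap.ker g) := by
    rw [← Submodule.finrank_map_subtype_eq, Submodule.map_comap_subtype]
    exact Submodule.finrank_mono inf_le_right
  omega

lemma eq_zero_of_mulVec_eq_zero_of_rank_eq_card {F m n : Type*} [Field F] [Fintype n]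
    {A : Matrix m n F} (hA : A.rank = Fintype.card n) {x : n → F} (hx : A *ᵥ x = 0) : x = 0 := by
  have hrn := LinearMap.finrank_range_add_finrank_ker A.mulVecLin
  rw [← Matrix.rank, hA, finrank_fintype_fun_eq_card, add_eq_left,
    Submodule.finrank_eq_zero] at hrn
  simpa [hrn] using (LinearMap.mem_ker.2 hx : x ∈ LinearMap.ker A.mulVecLin)

lemma exists_linearIndependent_row_sum_smul {K V ι : Type*} [Field K] [AddCommGroup V]
    [Module K V] [Fintype ι] (v : ι → V) :
    ∃ (B : Fin (finrank K (Submodule.span K (Set.range v))) → V)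
      (C : Matrix (Fin (finrank K (Submodule.span K (Set.range v)))) ι K),
      LinearIndependent K C.row ∧ ∀ ν, v ν = ∑ w, C w ν • B w := by
  set W := Submodule.span K (Set.range v)
  have hv : ∀ ν, v ν ∈ W := fun ν => Submodule.subset_span ⟨ν, rfl⟩
  have : FiniteDimensional K W := FiniteDimensional.span_of_finite K (Set.finite_range v)
  let b := Module.finBasis K W
  refine ⟨fun w => b w, of fun w ν => b.repr ⟨v ν, hv ν⟩ w, ?_, fun ν => ?_⟩
  · rw [Fintype.linearIndependent_iff]
    intro l hl w'
    have hl' : ∀ ν, ∑ w, l w * b.repr ⟨v ν, hv ν⟩ w = 0 := fun ν => by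
      simpa using congrFun hl ν
    obtain ⟨c, hc⟩ := (Submodule.mem_span_range_iff_exists_fun K).1 (b w').2
    have hb : b w' = ∑ ν, c ν • (⟨v ν, hv ν⟩ : W) := Subtype.ext (by simp [hc])
    have := congrArg (fun x : W => ∑ w, l w * b.repr x w) hb
    simp only [Basis.repr_self, map_sum, map_smul] at this
    simp only [Finsupp.single_apply, mul_ite, mul_one, mul_zero, sum_ite_eq, mem_univ, if_true,
      Finsupp.coe_finsetSum, Finset.sum_apply, Finsupp.coe_smul, Pi.smul_apply, smul_eq_mul,
      mul_sum] at this
    rw [this, sum_comm]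
    exact sum_eq_zero fun ν _ => by simp_rw [mul_left_comm (l _)]; rw [← mul_sum, hl', mul_zero]
  · have := congrArg Subtype.val (b.sum_repr ⟨v ν, hv ν⟩)
    simp only [Submodule.coe_sum, Submodule.coe_smul] at this
    exact this.symm

lemma inv_mulVec_apply_eq_zero {K : Type*} [Field K] {n r : ℕ} {T : Matrix (Fin n) (Fin n) K}
    (hT : IsUnit T) {U : Submodule K (Fin n → K)} (hU : finrank K U ≤ r)
    (hTU : ∀ μ : Fin n, (μ : ℕ) < r → T.col μ ∈ U) {c : Fin n → K} (hc : c ∈ U) {μ : Fin n}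
    (hμ : r ≤ μ) : (T⁻¹ *ᵥ c) μ = 0 := by
  have hrn : r ≤ n := hμ.trans μ.2.le
  set cols : Fin r → Fin n → K := fun w => T.col (Fin.castLE hrn w)
  have hind : LinearIndependent K cols :=
    (linearIndependent_cols_of_isUnit hT).comp _ (Fin.castLE_injective hrn)
  have hspan : Submodule.span K (Set.range cols) = U :=
    Submodule.eq_of_le_of_finrank_le
      (Submodule.span_le.2 (Set.range_subset_iff.2 fun w => hTU _ w.2))
      (by rwa [finrank_span_eq_card hind, Fintype.card_fin])
  have hker : U ≤ LinearMap.ker (LinearMap.proj μ ∘ₗ T⁻¹.mulVecLin) := by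
    rw [← hspan, Submodule.span_le, Set.range_subset_iff]
    intro w
    have hne : Fin.castLE hrn w ≠ μ := fun e => by
      rw [← e] at hμ
      exact (not_lt.2 hμ) w.2
    simp only [cols, LinearMap.coe_comp, Function.comp_apply, mulVecLin_apply, LinearMap.coe_proj,
      Function.eval, SetLike.mem_coe, LinearMap.mem_ker]
    rw [← mulVec_single_one, mulVec_mulVec, nonsing_inv_mul T ((isUnit_iff_isUnit_det T).1 hT),
      one_mulVec, Pi.single_eq_of_ne hne.symm]
  exact LinearMap.mem_ker.1 (hker hc)

end LinearAlgebra

section BlockDiagonal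

variable {R : Type*} [CommSemiring R] {ℓ : ℕ} {nn mm : Fin ℓ → ℕ}

lemma vecMul_blockDiagonal'_apply (x : (Σ i, Fin (nn i)) → R)
    (P : ∀ i, Matrix (Fin (nn i)) (Fin (mm i)) R) (i : Fin ℓ) (μ : Fin (mm i)) :
    (x ᵥ* blockDiagonal' P) ⟨i, μ⟩ = ∑ ν, x ⟨i, ν⟩ * P i ν μ := by
  simp only [vecMul, dotProduct, Fintype.sum_sigma]
  rw [sum_eq_single i fun j _ hj => sum_eq_zero fun ν _ => by
    rw [blockDiagonal'_apply_ne _ _ _ hj, mul_zero]] <;> simp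

lemma blockDiagonal'_mulVec_apply (P : ∀ i, Matrix (Fin (nn i)) (Fin (mm i)) R)
    (y : (Σ i, Fin (mm i)) → R) (i : Fin ℓ) (ν : Fin (nn i)) :
    (blockDiagonal' P *ᵥ y) ⟨i, ν⟩ = ∑ μ, P i ν μ * y ⟨i, μ⟩ := by
  simp only [mulVec, dotProduct, Fintype.sum_sigma]
  rw [sum_eq_single i fun j _ hj => sum_eq_zero fun μ _ => by
    rw [blockDiagonal'_apply_ne _ _ _ (Ne.symm hj), zero_mul]] <;> simp

lemma mul_blockDiagonal'_apply {s : Type*} (X : Matrix s (Σ i, Fin (nn i)) R)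
    (P : ∀ i, Matrix (Fin (nn i)) (Fin (mm i)) R) (r : s) (i : Fin ℓ) (μ : Fin (mm i)) :
    (X * blockDiagonal' P) r ⟨i, μ⟩ = ∑ ν, X r ⟨i, ν⟩ * P i ν μ :=
  vecMul_blockDiagonal'_apply (X r) P i μ

lemma linearIndependent_vecMul_blockDiagonal' {K F : Type*} [Field K] [Field F] [Algebra K F]
    {x : (Σ i, Fin (nn i)) → F} (hx : ∀ i, LinearIndependent K fun ν => x ⟨i, ν⟩)
    {P : ∀ i, Matrix (Fin (nn i)) (Fin (mm i)) K} (hP : ∀ i, LinearIndependent K (P i).col)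
    (i : Fin ℓ) :
    LinearIndependent K fun μ =>
      (x ᵥ* blockDiagonal' fun i => (P i).map (algebraMap K F)) ⟨i, μ⟩ := by
  have hcomp : (fun μ => (x ᵥ* blockDiagonal' fun i => (P i).map (algebraMap K F)) ⟨i, μ⟩)
      = (Fintype.linearCombination K fun ν => x ⟨i, ν⟩) ∘ (P i).col := by
    ext μ
    rw [Function.comp_apply, Fintype.linearCombination_apply, vecMul_blockDiagonal'_apply]
    simp [col, Algebra.smul_def, mul_comm]
  rw [hcomp]
  exact (hP i).map' _ (LinearMap.ker_eq_bot.2 (hx i).fintypeLinearCombination_injective)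

end BlockDiagonal

section OpEv

variable {F : Type} [Field F] (σ : F ≃+* F)

lemma iterate_eq_coe_pow (u : ℕ) : (⇑σ)^[u] = ⇑(σ ^ u) := (RingAut.coe_pow σ u).symm

lemma genNorm_add (a : F) (u v : ℕ) :
    genNorm σ a (u + v) = (⇑σ)^[u] (genNorm σ a v) * genNorm σ a u := by
  induction v with
  | zero => simp [genNorm]
  | succ v ih =>
    rw [← add_assoc, genNorm, ih, genNorm, iterate_eq_coe_pow, iterate_eq_coe_pow,
      iterate_eq_coe_pow, map_mul, ← RingAut.mul_apply, ← pow_add]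
    ring

@[simp] lemma opev_zero (a b : F) : opev σ a b 0 = b := by simp [opev, genNorm]

lemma opev_one (a b : F) : opev σ a b 1 = σ b * a := by simp [opev, genNorm]

lemma opev_opev (a b : F) (u v : ℕ) : opev σ a (opev σ a b v) u = opev σ a b (u + v) := by
  simp only [opev, genNorm_add, iterate_eq_coe_pow, map_mul, ← RingAut.mul_apply, ← pow_add]
  ring

lemma opev_add (a x y : F) (u : ℕ) : opev σ a (x + y) u = opev σ a x u + opev σ a y u := by
  simp only [opev, iterate_eq_coe_pow, map_add, add_mul]

lemma opev_sum (a : F) {ι : Type*} (s : Finset ι) (x : ι → F) (u : ℕ) :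
    opev σ a (∑ ν ∈ s, x ν) u = ∑ ν ∈ s, opev σ a (x ν) u := by
  simp only [opev, iterate_eq_coe_pow, map_sum, sum_mul]

lemma opev_mul (a x y : F) (u : ℕ) : opev σ a (x * y) u = (⇑σ)^[u] x * opev σ a y u := by
  simp only [opev, iterate_eq_coe_pow, map_mul, mul_assoc]

variable {K : Type} [Field K] [Algebra K F]

lemma opev_algebraMap_mul (hσ : ∀ c : K, σ (algebraMap K F c) = algebraMap K F c)
    (a : F) (c : K) (y : F) (u : ℕ) :
    opev σ a (algebraMap K F c * y) u = algebraMap K F c * opev σ a y u := by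
  rw [opev_mul, Function.iterate_fixed (hσ c)]

end OpEv

section LinearFactor

variable {F : Type} [Field F] {σ : F ≃+* F}

lemma SConj.symm {a b : F} (h : SConj σ a b) : SConj σ b a := by
  obtain ⟨c, hc, rfl⟩ := h
  refine ⟨c⁻¹, inv_ne_zero hc, ?_⟩
  have : σ c ≠ 0 := (map_ne_zero σ).2 hc
  rw [map_inv₀]
  field_simp

lemma SConj.trans {a b d : F} (hab : SConj σ a b) (hbd : SConj σ b d) : SConj σ a d := by
  obtain ⟨c, hc, rfl⟩ := hab
  obtain ⟨e, he, rfl⟩ := hbd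
  refine ⟨e * c, mul_ne_zero he hc, ?_⟩
  rw [map_mul, mul_inv]
  ring

variable (σ) {K : Type} [Field K] [Algebra K F]

/-- The σ-linear factor `X - c`, evaluated at the operator `D_a`. -/
def opLinearFactor (hσ : ∀ c : K, σ (algebraMap K F c) = algebraMap K F c) (a c : F) :
    F →ₗ[K] F where
  toFun b := σ b * a - c * b
  map_add' x y := by simp only [map_add]; ring
  map_smul' r x := by simp only [Algebra.smul_def, map_mul, hσ, RingHom.id_apply]; ring

variable {σ} (hσ : ∀ c : K, σ (algebraMap K F c) = algebraMap K F c)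

lemma opLinearFactor_apply (a c b : F) : opLinearFactor σ hσ a c b = σ b * a - c * b := rfl

lemma ker_opLinearFactor_eq_bot {a c : F} (h : ¬ SConj σ a c) :
    LinearMap.ker (opLinearFactor σ hσ a c) = ⊥ := by
  refine (LinearMap.ker_eq_bot').2 fun b hb => by_contra fun hb0 => h ⟨b, hb0, ?_⟩
  rw [opLinearFactor_apply, sub_eq_zero] at hb
  field_simp
  exact hb.symm

lemma ker_opLinearFactor_le_span (hfix : ∀ x : F, σ x = x → x ∈ Set.range (algebraMap K F))
    {a b₀ : F} (ha : a ≠ 0) (hb₀ : b₀ ≠ 0) :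
    LinearMap.ker (opLinearFactor σ hσ a (σ b₀ * a * b₀⁻¹)) ≤ K ∙ b₀ := by
  intro b hb
  rw [LinearMap.mem_ker, opLinearFactor_apply, sub_eq_zero] at hb
  have hσb₀ : σ b₀ ≠ 0 := (map_ne_zero σ).2 hb₀
  -- `b / b₀` is fixed by `σ`, hence lies in `K`
  obtain ⟨κ, hκ⟩ := hfix (b * b₀⁻¹) <| by
    rw [map_mul, map_inv₀]
    field_simp
    refine mul_right_cancel₀ ha ?_
    rw [mul_right_comm, hb]
    field_simp
  refine Submodule.mem_span_singleton.2 ⟨κ, ?_⟩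
  rw [Algebra.smul_def, hκ]
  field_simp

end LinearFactor

section OpPoly

variable {F : Type} [Field F] (σ : F ≃+* F)

/-- The σ-polynomial `∑_{u<d} f u X^u`, evaluated at the operator `D_a` on `b`. -/
def opPoly (f : ℕ → F) (d : ℕ) (a b : F) : F := ∑ u ∈ range d, f u * opev σ a b u

lemma opPoly_zero_right (f : ℕ → F) (d : ℕ) (a : F) : opPoly σ f d a 0 = 0 := by
  simp [opPoly, opev]

lemma exists_coeff_quotient {R : Type*} [Ring R] (e f : ℕ → R) (d : ℕ) :
    ∃ h : ℕ → R, h d = 0 ∧ ∀ w < d, f (w + 1) = h w - h (w + 1) * e (w + 1) := by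
  induction d generalizing e f with
  | zero => exact ⟨0, rfl, fun w hw => absurd hw (Nat.not_lt_zero w)⟩
  | succ d ih =>
    obtain ⟨h, hd, hrec⟩ := ih (e ∘ Nat.succ) (f ∘ Nat.succ)
    refine ⟨fun w => Nat.casesOn w (f 1 + h 0 * e 1) h, hd, fun w hw => ?_⟩
    cases w with
    | zero => simp
    | succ w => simpa using hrec w (by omega)

/-- Right division by `X - c`: `h` is the quotient and `f 0 + h 0 * c` the remainder. -/
lemma opPoly_succ_eq {f h : ℕ → F} {c : F} {d : ℕ} (hd : h d = 0)
    (hrec : ∀ w < d, f (w + 1) = h w - h (w + 1) * (⇑σ)^[w + 1] c) (a b : F) :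
    opPoly σ f (d + 1) a b = opPoly σ h d a (σ b * a - c * b) + (f 0 + h 0 * c) * b := by
  have htel := sum_range_succ (fun w => h w * ((⇑σ)^[w] c * opev σ a b w)) d
  rw [sum_range_succ'] at htel
  simp only [hd, zero_mul, add_zero, Function.iterate_zero, id, opev_zero] at htel
  have hstep : ∀ w, opev σ a (σ b * a - c * b) w
      = opev σ a b (w + 1) - (⇑σ)^[w] c * opev σ a b w := fun w => by
    rw [show σ b * a - c * b = opev σ a b 1 + -c * b by rw [opev_one]; ring, opev_add, opev_mul,
      opev_opev, iterate_eq_coe_pow, map_neg, ← iterate_eq_coe_pow]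
    ring
  simp only [opPoly, sum_range_succ' _ d, opev_zero, hstep]
  rw [sum_congr rfl fun w hw => by rw [hrec w (mem_range.1 hw)]]
  simp only [sub_mul, mul_sub, sum_sub_distrib, mul_assoc]
  linear_combination -htel

variable {K : Type} [Field K] [Algebra K F] {σ}
  (hσ : ∀ c : K, σ (algebraMap K F c) = algebraMap K F c)

def opPolyₗ (f : ℕ → F) (d : ℕ) (a : F) : F →ₗ[K] F where
  toFun := opPoly σ f d a
  map_add' x y := by simp only [opPoly, opev_add, mul_add, sum_add_distrib]
  map_smul' r x := by
    simp only [opPoly, Algebra.smul_def, opev_algebraMap_mul σ hσ, mul_sum, RingHom.id_apply]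
    exact sum_congr rfl fun u _ => by ring

lemma opPolyₗ_apply (f : ℕ → F) (d : ℕ) (a b : F) : opPolyₗ hσ f d a b = opPoly σ f d a b := rfl

end OpPoly

section RootBound

variable {K F : Type} [Field K] [Field F] [Algebra K F] [FiniteDimensional K F] {σ : F ≃+* F}
  (hσ : ∀ c : K, σ (algebraMap K F c) = algebraMap K F c)

theorem sum_finrank_ker_opPolyₗ_lt (hfix : ∀ x : F, σ x = x → x ∈ Set.range (algebraMap K F))
    {ι : Type*} [Fintype ι] {aa : ι → F} (ha0 : ∀ i, aa i ≠ 0)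
    (haconj : ∀ i j, i ≠ j → ¬ SConj σ (aa i) (aa j))
    (d : ℕ) (f : ℕ → F) (hf : ∃ u < d, f u ≠ 0) :
    ∑ i, finrank K (LinearMap.ker (opPolyₗ hσ f d (aa i))) < d := by
  classical
  induction d generalizing f with
  | zero => obtain ⟨u, hu, -⟩ := hf; exact absurd hu (Nat.not_lt_zero u)
  | succ d ih =>
    by_cases hroot : ∀ i, LinearMap.ker (opPolyₗ hσ f (d + 1) (aa i)) = ⊥
    · rw [sum_eq_zero fun i _ => by rw [hroot i, finrank_bot]]
      omega
    obtain ⟨i₀, hi₀⟩ := not_forall.1 hroot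
    obtain ⟨b₀, hb₀, hb₀0⟩ := Submodule.exists_mem_ne_zero_of_ne_bot hi₀
    set c := σ b₀ * aa i₀ * b₀⁻¹
    obtain ⟨h, hhd, hrec⟩ := exists_coeff_quotient (fun v => (⇑σ)^[v] c) f d
    have hdiv := opPoly_succ_eq σ hhd hrec
    have hc : σ b₀ * aa i₀ - c * b₀ = 0 := by simp only [c]; field_simp; ring
    -- evaluating the division identity at the root `b₀` kills the remainder
    have hr : f 0 + h 0 * c = 0 := by
      have := hdiv (aa i₀) b₀
      rw [← opPolyₗ_apply hσ, LinearMap.mem_ker.1 hb₀, hc, opPoly_zero_right, zero_add] at this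
      exact (mul_eq_zero.1 this.symm).resolve_right hb₀0
    have hh : ∃ u < d, h u ≠ 0 := by
      by_contra! hh0
      have hz : ∀ w ≤ d, h w = 0 := fun w hw =>
        (Nat.lt_or_eq_of_le hw).elim (hh0 w) (fun e => e ▸ hhd)
      obtain ⟨u, hu, hfu⟩ := hf
      refine hfu ?_
      cases u with
      | zero => simpa [hz 0 (Nat.zero_le d)] using hr
      | succ w => rw [hrec w (by omega), hz w (by omega), hz (w + 1) (by omega)]; ring
    have hmap : ∀ i, (LinearMap.ker (opPolyₗ hσ f (d + 1) (aa i))).map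
        (opLinearFactor σ hσ (aa i) c) ≤ LinearMap.ker (opPolyₗ hσ h d (aa i)) := by
      rintro i - ⟨b, hb, rfl⟩
      have := hdiv (aa i) b
      rw [← opPolyₗ_apply hσ, LinearMap.mem_ker.1 hb, hr, zero_mul, add_zero] at this
      exact LinearMap.mem_ker.2 this.symm
    have hker : ∀ i, finrank K (LinearMap.ker (opLinearFactor σ hσ (aa i) c))
        ≤ if i = i₀ then 1 else 0 := by
      intro i
      split_ifs with hi
      · subst hi
        exact (Submodule.finrank_mono
          (ker_opLinearFactor_le_span hσ hfix (ha0 i) hb₀0)).trans (finrank_span_singleton hb₀0).le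
      · rw [ker_opLinearFactor_eq_bot hσ fun hic =>
          haconj i i₀ hi (hic.trans (SConj.symm ⟨b₀, hb₀0, rfl⟩))]
        simp
    calc ∑ i, finrank K (LinearMap.ker (opPolyₗ hσ f (d + 1) (aa i)))
        ≤ ∑ i, (finrank K (LinearMap.ker (opPolyₗ hσ h d (aa i))) + if i = i₀ then 1 else 0) :=
          sum_le_sum fun i _ => (finrank_le_finrank_map_add_finrank_ker _ _).trans
            (add_le_add (Submodule.finrank_mono (hmap i)) (hker i))
      _ < d + 1 := by
          rw [sum_add_distrib, sum_ite_eq' univ i₀]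
          simpa using ih h hh

end RootBound

section Moore

variable {K F : Type} [Field K] [Field F] [Algebra K F] {σ : F ≃+* F} {ℓ : ℕ}
  {nn mm : Fin ℓ → ℕ} {aa : Fin ℓ → F}

lemma moore_mul_blockDiagonal' (hσ : ∀ c : K, σ (algebraMap K F c) = algebraMap K F c)
    (d : ℕ) (x : (Σ i, Fin (nn i)) → F) (P : ∀ i, Matrix (Fin (nn i)) (Fin (mm i)) K) :
    moore σ nn aa d x * blockDiagonal' (fun i => (P i).map (algebraMap K F))
      = moore σ mm aa d (x ᵥ* blockDiagonal' fun i => (P i).map (algebraMap K F)) := by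
  ext u ⟨i, μ⟩
  simp only [mul_blockDiagonal'_apply, vecMul_blockDiagonal'_apply, moore, of_apply, map_apply,
    opev_sum]
  exact sum_congr rfl fun ν _ => by rw [mul_comm, ← opev_algebraMap_mul σ hσ, mul_comm]

lemma mooreMat_mul_blockDiagonal' (hσ : ∀ c : K, σ (algebraMap K F c) = algebraMap K F c)
    {s : ℕ} (d : ℕ) (X : Matrix (Fin s) (Σ i, Fin (nn i)) F)
    (P : ∀ i, Matrix (Fin (nn i)) (Fin (mm i)) K) :
    mooreMat σ nn aa d X * blockDiagonal' (fun i => (P i).map (algebraMap K F))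
      = mooreMat σ mm aa d (X * blockDiagonal' fun i => (P i).map (algebraMap K F)) := by
  ext ⟨r, u⟩ q
  exact congrFun₂ (moore_mul_blockDiagonal' hσ d (X r) P) u q

lemma mooreMat_add {s : ℕ} (d : ℕ) (X Y : Matrix (Fin s) (Σ i, Fin (nn i)) F) :
    mooreMat σ nn aa d (X + Y) = mooreMat σ nn aa d X + mooreMat σ nn aa d Y := by
  ext r p
  exact opev_add σ _ _ _ _

/-- Row `(j, u)` of `λ_N(M · λ_k(β))` is `∑_w σ^u(M j w)` times row `u + w < N + k - 1` of
`λ(β)`. -/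
lemma mooreMat_codeword_mulVec_eq_zero {β h : (Σ i, Fin (nn i)) → F} {D : ℕ}
    (hβ : moore σ nn aa D β *ᵥ h = 0) {s k N : ℕ} (hND : N + k ≤ D + 1)
    (M : Matrix (Fin s) (Fin k) F) : mooreMat σ nn aa N (codeword σ nn aa β k M) *ᵥ h = 0 := by
  ext ⟨j, u⟩
  have hrow : ∀ w : Fin k, ∑ p, opev σ (aa p.1) (β p) (u + w) * h p = 0 := fun w =>
    congrFun hβ ⟨u + w, by omega⟩
  simp only [mulVec, dotProduct, mooreMat, codeword, of_apply, mul_apply, moore, opev_sum,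
    opev_mul, opev_opev, sum_mul, Pi.zero_apply]
  rw [sum_comm]
  exact sum_eq_zero fun w _ => by simp only [mul_assoc, ← mul_sum, hrow w, mul_zero]

lemma LOmat_mulVec_eq_zero_iff (β h : (Σ i, Fin (nn i)) → F) {s : ℕ}
    (R : Matrix (Fin s) (Σ i, Fin (nn i)) F) (n t k : ℕ) :
    LOmat σ nn aa β R n t k *ᵥ h = 0 ↔
      moore σ nn aa (n - t - 1) β *ᵥ h = 0 ∧ mooreMat σ nn aa (n - t - k) R *ᵥ h = 0 := by
  have : LOmat σ nn aa β R n t k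
      = fromRows (moore σ nn aa (n - t - 1) β) (mooreMat σ nn aa (n - t - k) R) := by
    ext (r | r) p <;> rfl
  rw [this, fromRows_mulVec, ← Sum.elim_zero_zero, Sum.elim_eq_iff]

end Moore

section MooreRank

variable {K F : Type} [Field K] [Field F] [Algebra K F] [FiniteDimensional K F] {σ : F ≃+* F}
  {ℓ : ℕ} {nn mm : Fin ℓ → ℕ} {aa : Fin ℓ → F}

theorem linearIndependent_moore_row (hσ : ∀ c : K, σ (algebraMap K F c) = algebraMap K F c)
    (hfix : ∀ x : F, σ x = x → x ∈ Set.range (algebraMap K F)) (ha0 : ∀ i, aa i ≠ 0)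
    (haconj : ∀ i j, i ≠ j → ¬ SConj σ (aa i) (aa j)) {γ : (Σ i, Fin (mm i)) → F}
    (hγ : ∀ i, LinearIndependent K fun μ => γ ⟨i, μ⟩) {d : ℕ} (hd : d ≤ ∑ i, mm i) :
    LinearIndependent F (moore σ mm aa d γ).row := by
  rw [Fintype.linearIndependent_iff]
  intro g hg
  by_contra! hne
  obtain ⟨u₀, hu₀⟩ := hne
  set f : ℕ → F := fun u => if hu : u < d then g ⟨u, hu⟩ else 0
  -- each block of `γ` lies in the root space of the σ-polynomial with coefficients `g`
  have hroots : ∀ i, mm i ≤ finrank K (LinearMap.ker (opPolyₗ hσ f d (aa i))) := fun i => by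
    rw [← Fintype.card_fin (mm i), ← finrank_span_eq_card (hγ i)]
    refine Submodule.finrank_mono (Submodule.span_le.2 (Set.range_subset_iff.2 fun μ => ?_))
    have := congrFun hg ⟨i, μ⟩
    simp only [Finset.sum_apply, Pi.smul_apply, row, moore, of_apply, smul_eq_mul,
      Pi.zero_apply] at this
    rw [SetLike.mem_coe, LinearMap.mem_ker, opPolyₗ_apply, opPoly,
      ← Fin.sum_univ_eq_sum_range (fun u => f u * opev σ (aa i) (γ ⟨i, μ⟩) u)]
    simpa [f] using this
  have hbound := sum_finrank_ker_opPolyₗ_lt hσ hfix ha0 haconj d f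
    ⟨u₀, u₀.2, by simpa [f] using hu₀⟩
  have := sum_le_sum fun i (_ : i ∈ univ) => hroots i
  omega

theorem eq_zero_of_moore_mulVec_eq_zero (hσ : ∀ c : K, σ (algebraMap K F c) = algebraMap K F c)
    (hfix : ∀ x : F, σ x = x → x ∈ Set.range (algebraMap K F)) (ha0 : ∀ i, aa i ≠ 0)
    (haconj : ∀ i j, i ≠ j → ¬ SConj σ (aa i) (aa j)) {γ : (Σ i, Fin (mm i)) → F}
    (hγ : ∀ i, LinearIndependent K fun μ => γ ⟨i, μ⟩) {d : ℕ} (hd : ∑ i, mm i ≤ d)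
    {g : (Σ i, Fin (mm i)) → F} (hg : moore σ mm aa d γ *ᵥ g = 0) : g = 0 := by
  refine eq_zero_of_mulVec_eq_zero_of_rank_eq_card (A := moore σ mm aa (∑ i, mm i) γ) ?_ ?_
  · rw [(linearIndependent_moore_row hσ hfix ha0 haconj hγ le_rfl).rank_matrix]
    simp [Fintype.card_sigma]
  · ext u
    exact congrFun hg (Fin.castLE hd u)

theorem lt_wtV_of_moore_mulVec_eq_zero (hσ : ∀ c : K, σ (algebraMap K F c) = algebraMap K F c)
    (hfix : ∀ x : F, σ x = x → x ∈ Set.range (algebraMap K F)) (ha0 : ∀ i, aa i ≠ 0)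
    (haconj : ∀ i j, i ≠ j → ¬ SConj σ (aa i) (aa j)) {β : (Σ i, Fin (nn i)) → F}
    (hβ : ∀ i, LinearIndependent K fun μ => β ⟨i, μ⟩) {d : ℕ} {h : (Σ i, Fin (nn i)) → F}
    (hh : moore σ nn aa d β *ᵥ h = 0) (hh0 : h ≠ 0) : d < wtV K nn h := by
  by_contra! hwt
  choose B C hC hBC using fun i =>
    exists_linearIndependent_row_sum_smul (K := K) fun ν : Fin (nn i) => h ⟨i, ν⟩
  have hhB : h = (blockDiagonal' fun i => (C i)ᵀ.map (algebraMap K F)) *ᵥ fun q => B q.1 q.2 := by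
    ext ⟨i, ν⟩
    simp [blockDiagonal'_mulVec_apply, hBC i ν, Algebra.smul_def]
  rw [hhB, mulVec_mulVec, moore_mul_blockDiagonal' hσ] at hh
  refine hh0 (hhB.trans ?_)
  rw [eq_zero_of_moore_mulVec_eq_zero hσ hfix ha0 haconj
    (linearIndependent_vecMul_blockDiagonal' hβ hC) hwt hh, mulVec_zero]

theorem eq_of_forall_sum_mul_opev_eq (hσ : ∀ c : K, σ (algebraMap K F c) = algebraMap K F c)
    (hfix : ∀ x : F, σ x = x → x ∈ Set.range (algebraMap K F)) (ha0 : ∀ i, aa i ≠ 0)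
    (haconj : ∀ i j, i ≠ j → ¬ SConj σ (aa i) (aa j)) {β : (Σ i, Fin (nn i)) → F}
    (hβ : ∀ i, LinearIndependent K fun μ => β ⟨i, μ⟩) {tt : Fin ℓ → ℕ} {k : ℕ}
    (hk : k + ∑ i, tt i ≤ ∑ i, nn i) {v v' : Fin k → F}
    (hvv' : ∀ i (μ : Fin (nn i)), tt i ≤ μ →
      ∑ u, v u * opev σ (aa i) (β ⟨i, μ⟩) u = ∑ u, v' u * opev σ (aa i) (β ⟨i, μ⟩) u) :
    v = v' := by
  let γ : (Σ i, Fin (nn i - tt i)) → F := fun q => β ⟨q.1, ⟨tt q.1 + q.2, by omega⟩⟩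
  have hγ : ∀ i, LinearIndependent K fun w => γ ⟨i, w⟩ := fun i =>
    (hβ i).comp _ fun w w' e => Fin.ext (by simpa using congrArg Fin.val e)
  have hk' : k ≤ ∑ i, (nn i - tt i) := by
    have : ∑ i, nn i ≤ ∑ i, (nn i - tt i) + ∑ i, tt i := by
      rw [← sum_add_distrib]
      exact sum_le_sum fun i _ => le_tsub_add
    omega
  refine vecMul_injective_iff.2 (linearIndependent_moore_row hσ hfix ha0 haconj hγ hk') ?_
  ext ⟨i, w⟩
  exact hvv' i _ (Nat.le_add_right _ _)

end MooreRank

section ErrorSupport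

variable {K F : Type} [Field K] [Field F] [Algebra K F] {σ : F ≃+* F}
  {ℓ : ℕ} {nn : Fin ℓ → ℕ} {aa : Fin ℓ → F}

lemma finrank_ker_linearCombination_add_rkq {ι : Type} [Fintype ι] (v : ι → F) :
    finrank K (LinearMap.ker (Fintype.linearCombination K v)) + rkq K v = Fintype.card ι := by
  rw [rkq, ← Fintype.range_linearCombination, add_comm, LinearMap.finrank_range_add_finrank_ker,
    finrank_fintype_fun_eq_card]

lemma blockDiagonal'_mulVec_eq_zero_of_rank_mooreMat {tt : Fin ℓ → ℕ}
    (hσ : ∀ c : K, σ (algebraMap K F c) = algebraMap K F c) {s N : ℕ}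
    (X : Matrix (Fin s) (Σ i, Fin (tt i)) F) (C : ∀ i, Matrix (Fin (tt i)) (Fin (nn i)) K)
    {h : (Σ i, Fin (nn i)) → F}
    (hrk : (mooreMat σ nn aa N (X * blockDiagonal' fun i => (C i).map (algebraMap K F))).rank
      = ∑ i, tt i)
    (hh : mooreMat σ nn aa N (X * blockDiagonal' fun i => (C i).map (algebraMap K F)) *ᵥ h = 0) :
    (blockDiagonal' fun i => (C i).map (algebraMap K F)) *ᵥ h = 0 := by
  rw [← mooreMat_mul_blockDiagonal' hσ] at hrk hh
  rw [← mulVec_mulVec] at hh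
  refine eq_zero_of_mulVec_eq_zero_of_rank_eq_card (le_antisymm (rank_le_card_width _) ?_) hh
  calc Fintype.card (Σ i, Fin (tt i)) = ∑ i, tt i := by simp [Fintype.card_sigma]
    _ ≤ _ := hrk ▸ rank_mul_le_left _ _

/-- `C` is a basis of the `K`-row space of the error block; the rank hypothesis makes `λ_N(B)`
injective, which is what puts its rows among the `K`-linear relations of `h^(i)`. -/
theorem exists_rowSpace_basis_mem_ker (hσ : ∀ c : K, σ (algebraMap K F c) = algebraMap K F c)
    {s N : ℕ} {E : Matrix (Fin s) (Σ i, Fin (nn i)) F} {h : (Σ i, Fin (nn i)) → F}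
    (hrk : (mooreMat σ nn aa N E).rank = wtM K nn E) (hE : mooreMat σ nn aa N E *ᵥ h = 0)
    (i : Fin ℓ) :
    ∃ (B : Fin (rkqMat K (of fun r ν => E r ⟨i, ν⟩)) → Fin s → F)
      (C : Matrix (Fin (rkqMat K (of fun r ν => E r ⟨i, ν⟩))) (Fin (nn i)) K),
      LinearIndependent K C.row ∧
      (∀ w, C.row w ∈ LinearMap.ker (Fintype.linearCombination K fun ν => h ⟨i, ν⟩)) ∧
      ∀ r ν, E r ⟨i, ν⟩ = ∑ w, B w r * algebraMap K F (C w ν) := by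
  choose B C hC hBC using fun i =>
    exists_linearIndependent_row_sum_smul (K := K) fun ν : Fin (nn i) => fun r : Fin s => E r ⟨i, ν⟩
  have hBC' : ∀ i r ν, E r ⟨i, ν⟩ = ∑ w, B i w r * algebraMap K F (C i w ν) := fun i r ν => by
    simp [congrFun (hBC i ν) r, Algebra.smul_def, mul_comm]
  set tt : Fin ℓ → ℕ := fun i => finrank K (Submodule.span K (Set.range fun ν r => E r ⟨i, ν⟩))
  have hEBC : E = (of fun r (q : Σ i, Fin (tt i)) => B q.1 q.2 r)
      * blockDiagonal' fun i => (C i).map (algebraMap K F) := by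
    ext r ⟨i, ν⟩
    rw [mul_blockDiagonal'_apply, hBC']
    rfl
  have hCh := blockDiagonal'_mulVec_eq_zero_of_rank_mooreMat hσ _ C
    (by rw [← hEBC]; exact hrk) (by rw [← hEBC]; exact hE)
  refine ⟨B i, C i, hC i, fun (w : Fin (tt i)) => ?_, hBC' i⟩
  have hw := congrFun hCh ⟨i, w⟩
  rw [blockDiagonal'_mulVec_apply] at hw
  simpa [Fintype.linearCombination_apply, Algebra.smul_def, row] using hw

/-- Counting dimensions, the `K`-linear relations of `h^(i)` are exactly the `K`-row space of
`E^(i)`, and the first `t_i` columns of `T^(i)` span them. -/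
theorem mul_blockDiagonal'_inv_transpose_apply_eq_zero
    (hσ : ∀ c : K, σ (algebraMap K F c) = algebraMap K F c) {s N : ℕ}
    {E : Matrix (Fin s) (Σ i, Fin (nn i)) F} {h : (Σ i, Fin (nn i)) → F}
    (hrk : (mooreMat σ nn aa N E).rank = wtM K nn E) (hE : mooreMat σ nn aa N E *ᵥ h = 0)
    (hwt : ∑ i, nn i ≤ wtV K nn h + wtM K nn E)
    {T : ∀ i, Matrix (Fin (nn i)) (Fin (nn i)) K} (hT : ∀ i, IsUnit (T i))
    (hTz : ∀ i (μ : Fin (nn i)), (μ : ℕ) < rkqMat K (of fun r ν => E r ⟨i, ν⟩) →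
      ∑ ν, h ⟨i, ν⟩ * algebraMap K F (T i ν μ) = 0)
    (r : Fin s) (i : Fin ℓ) (μ : Fin (nn i)) (hμ : rkqMat K (of fun r ν => E r ⟨i, ν⟩) ≤ μ) :
    (E * blockDiagonal' fun i => (T i)⁻¹ᵀ.map (algebraMap K F)) r ⟨i, μ⟩ = 0 := by
  choose B C hC hCker hBC using exists_rowSpace_basis_mem_ker hσ hrk hE
  set tt : Fin ℓ → ℕ := fun i => rkqMat K (of fun r ν => E r ⟨i, ν⟩)
  set ψ : ∀ i, (Fin (nn i) → K) →ₗ[K] F := fun i => Fintype.linearCombination K fun ν => h ⟨i, ν⟩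
  have hle : ∀ i, tt i ≤ finrank K (LinearMap.ker (ψ i)) := fun i => by
    rw [← Fintype.card_fin (tt i), ← finrank_span_eq_card (hC i)]
    exact Submodule.finrank_mono (Submodule.span_le.2 (Set.range_subset_iff.2 (hCker i)))
  have heq : ∀ i, finrank K (LinearMap.ker (ψ i)) = tt i := by
    have hsum : ∑ i, finrank K (LinearMap.ker (ψ i)) + wtV K nn h = ∑ i, nn i := by
      rw [wtV, ← sum_add_distrib]
      exact sum_congr rfl fun i _ => (finrank_ker_linearCombination_add_rkq _).trans
        (Fintype.card_fin _)
    have hwt' : ∑ i, nn i ≤ wtV K nn h + ∑ i, tt i := hwt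
    have : ∑ i, finrank K (LinearMap.ker (ψ i)) ≤ ∑ i, tt i := by omega
    exact fun i => ((sum_eq_sum_iff_of_le fun i _ => hle i).1
      (le_antisymm (sum_le_sum fun i _ => hle i) this) i (mem_univ i)).symm
  have hTker : ∀ μ' : Fin (nn i), (μ' : ℕ) < tt i → (T i).col μ' ∈ LinearMap.ker (ψ i) :=
    fun μ' hμ' => by
      simpa [ψ, Fintype.linearCombination_apply, Algebra.smul_def, col, mul_comm] using hTz i μ' hμ'
  rw [mul_blockDiagonal'_apply]
  simp_rw [hBC, sum_mul]
  rw [sum_comm]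
  refine sum_eq_zero fun w _ => ?_
  have hCT : ∑ ν, C i w ν * (T i)⁻¹ μ ν = ((T i)⁻¹ *ᵥ (C i).row w) μ := by
    simp [mulVec, dotProduct, mul_comm, row]
  simp_rw [map_apply, transpose_apply, mul_assoc, ← mul_sum, ← map_mul, ← map_sum, hCT,
    inv_mulVec_apply_eq_zero (hT i) (heq i).le hTker (hCker i w) hμ, map_zero, mul_zero]

end ErrorSupport

theorem LO_message_recovery_general
    {K F : Type} [Field K] [Field F] [Algebra K F] [Fintype F]
    (σ : F ≃+* F)
    (hfix : ∀ x : F, σ x = x ↔ x ∈ Set.range (algebraMap K F))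
    {ℓ : ℕ} (nn : Fin ℓ → ℕ) (aa : Fin ℓ → F)
    (ha0 : ∀ i, aa i ≠ 0)
    (haconj : ∀ i j : Fin ℓ, i ≠ j → ¬ SConj σ (aa i) (aa j))
    (β : (Σ i : Fin ℓ, Fin (nn i)) → F)
    (hβ : ∀ i, LinearIndependent K fun μ : Fin (nn i) => β ⟨i, μ⟩)
    {s : ℕ} {k n t : ℕ} (hn : n = ∑ i, nn i)
    (hkn : k ≤ n)
    (M : Matrix (Fin s) (Fin k) F)
    (E R : Matrix (Fin s) (Σ i : Fin ℓ, Fin (nn i)) F)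
    (hR : R = codeword σ nn aa β k M + E)
    (ht : wtM K nn E = t) (htnk : t ≤ n - k)
    (hrk : (mooreMat σ nn aa (n - t - k) E).rank = t)
    (h : (Σ i : Fin ℓ, Fin (nn i)) → F) (hh0 : h ≠ 0)
    (hker : (LOmat σ nn aa β R n t k).mulVec h = 0)
    (T : (i : Fin ℓ) → Matrix (Fin (nn i)) (Fin (nn i)) K)
    (hT : ∀ i, IsUnit (T i))
    (hTz : ∀ (i : Fin ℓ) (μ : Fin (nn i)),
      (μ : ℕ) < rkqMat K (Matrix.of fun (r : Fin s) (ν : Fin (nn i)) => E r ⟨i, ν⟩) →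
      ∑ ν : Fin (nn i), h ⟨i, ν⟩ * algebraMap K F (T i ν μ) = 0) :
    ∀ (βt : (Σ i : Fin ℓ, Fin (nn i)) → F)
      (Rt : Matrix (Fin s) (Σ i : Fin ℓ, Fin (nn i)) F),
      (∀ p : Σ i : Fin ℓ, Fin (nn i),
        βt p = ∑ ν : Fin (nn p.1), β ⟨p.1, ν⟩ * algebraMap K F (((T p.1)⁻¹).transpose ν p.2)) →
      (∀ (j : Fin s) (p : Σ i : Fin ℓ, Fin (nn i)),
        Rt j p = ∑ ν : Fin (nn p.1), R j ⟨p.1, ν⟩ * algebraMap K F (((T p.1)⁻¹).transpose ν p.2)) →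
      ∀ j : Fin s,
        (∀ (i : Fin ℓ) (μ : Fin (nn i)),
          rkqMat K (Matrix.of fun (r : Fin s) (ν : Fin (nn i)) => E r ⟨i, ν⟩) ≤ (μ : ℕ) →
          Rt j ⟨i, μ⟩ = ∑ u : Fin k, M j u * opev σ (aa i) (βt ⟨i, μ⟩) (u : ℕ)) ∧
        ∀ v : Fin k → F,
          (∀ (i : Fin ℓ) (μ : Fin (nn i)),
            rkqMat K (Matrix.of fun (r : Fin s) (ν : Fin (nn i)) => E r ⟨i, ν⟩) ≤ (μ : ℕ) →
            ∑ u : Fin k, v u * opev σ (aa i) (βt ⟨i, μ⟩) (u : ℕ) = Rt j ⟨i, μ⟩) →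
          v = M j := by
  intro βt Rt hβt hRt j
  have : FiniteDimensional K F := Module.Finite.of_finite
  have hσ : ∀ c : K, σ (algebraMap K F c) = algebraMap K F c := fun c => (hfix _).2 ⟨c, rfl⟩
  have hfix' : ∀ x, σ x = x → x ∈ Set.range (algebraMap K F) := fun x => (hfix x).1
  obtain ⟨hβker, hRker⟩ := (LOmat_mulVec_eq_zero_iff β h R n t k).1 hker
  have hEker : mooreMat σ nn aa (n - t - k) E *ᵥ h = 0 := by
    rwa [hR, mooreMat_add, add_mulVec,
      mooreMat_codeword_mulVec_eq_zero hβker (by omega) M, zero_add] at hRker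
  have hwt := lt_wtV_of_moore_mulVec_eq_zero hσ hfix' ha0 haconj hβ hβker hh0
  set P := blockDiagonal' fun i => (T i)⁻¹ᵀ.map (algebraMap K F)
  have hβP : βt = β ᵥ* P := funext fun ⟨i, μ⟩ => by rw [hβt, vecMul_blockDiagonal'_apply]; rfl
  have hRP : Rt = M * moore σ nn aa k βt + E * P := by
    have : Rt = R * P := by ext r ⟨i, μ⟩; rw [hRt, mul_blockDiagonal'_apply]; rfl
    rw [this, hR, codeword, Matrix.add_mul, Matrix.mul_assoc, moore_mul_blockDiagonal' hσ, hβP]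
  have hEP := mul_blockDiagonal'_inv_transpose_apply_eq_zero hσ (hrk.trans ht.symm) hEker
    (by omega) hT hTz j
  have hA : ∀ i (μ : Fin (nn i)), rkqMat K (of fun r ν => E r ⟨i, ν⟩) ≤ μ →
      Rt j ⟨i, μ⟩ = ∑ u, M j u * opev σ (aa i) (βt ⟨i, μ⟩) u := fun i μ hμ => by
    rw [hRP, Matrix.add_apply, hEP i μ hμ, add_zero]
    rfl
  have hβt' := hβP ▸ linearIndependent_vecMul_blockDiagonal' hβ fun i =>
    linearIndependent_cols_of_isUnit ((isUnit_transpose _).2 (isUnit_nonsing_inv_iff.2 (hT i)))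
  refine ⟨hA, fun v hv => eq_of_forall_sum_mul_opev_eq hσ hfix' ha0 haconj hβt' ?_
    fun i μ hμ => (hv i μ hμ).trans (hA i μ hμ)⟩
  exact (by omega : k + wtM K nn E ≤ ∑ i, nn i)

/-- Message recovery by interpolation in the Loidreau–Overbeck decoder.
With `h` a nonzero right-kernel vector of `L`, `T^(i)` invertible over `GF(q)` zeroing
the first `t_i` entries of `h^(i)·T^(i)`, `D^(i) := ((T^(i))⁻¹)ᵀ`, `β̃^(i) := β^(i)·D^(i)`
and `R̃^(i) := R^(i)·D^(i)`: for all `j`, `i` and `μ ≥ t_i`, the `(j,μ)`-entry of `R̃^(i)`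
equals `Σ_{u<k} M_{j,u}·D_{a_i}^u(β̃^(i)_μ)`, and the `j`-th row of `M` is the unique such
interpolating vector. -/
theorem LO_message_recovery
    {K F : Type} [Field K] [Field F] [Algebra K F] [Fintype K] [Fintype F]
    (σ : F ≃+* F)
    (hfix : ∀ x : F, σ x = x ↔ x ∈ Set.range (algebraMap K F))
    {ℓ : ℕ} (hℓ : 1 ≤ ℓ) (nn : Fin ℓ → ℕ) (aa : Fin ℓ → F)
    (ha0 : ∀ i, aa i ≠ 0)
    (haconj : ∀ i j : Fin ℓ, i ≠ j → ¬ SConj σ (aa i) (aa j))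
    (β : (Σ i : Fin ℓ, Fin (nn i)) → F)
    (hβ : ∀ i, LinearIndependent K fun μ : Fin (nn i) => β ⟨i, μ⟩)
    {s : ℕ} (hs : 1 ≤ s) {k n t : ℕ} (hn : n = ∑ i, nn i)
    (hk : 1 ≤ k) (hkn : k ≤ n)
    (M : Matrix (Fin s) (Fin k) F)
    (E R : Matrix (Fin s) (Σ i : Fin ℓ, Fin (nn i)) F)
    (hR : R = codeword σ nn aa β k M + E)
    (ht : wtM K nn E = t) (htnk : t ≤ n - k)
    (hrk : (mooreMat σ nn aa (n - t - k) E).rank = t)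
    (h : (Σ i : Fin ℓ, Fin (nn i)) → F) (hh0 : h ≠ 0)
    (hker : (LOmat σ nn aa β R n t k).mulVec h = 0)
    (T : (i : Fin ℓ) → Matrix (Fin (nn i)) (Fin (nn i)) K)
    (hT : ∀ i, IsUnit (T i))
    (hTz : ∀ (i : Fin ℓ) (μ : Fin (nn i)),
      (μ : ℕ) < rkqMat K (Matrix.of fun (r : Fin s) (ν : Fin (nn i)) => E r ⟨i, ν⟩) →
      ∑ ν : Fin (nn i), h ⟨i, ν⟩ * algebraMap K F (T i ν μ) = 0) :
    ∀ (βt : (Σ i : Fin ℓ, Fin (nn i)) → F)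
      (Rt : Matrix (Fin s) (Σ i : Fin ℓ, Fin (nn i)) F),
      (∀ p : Σ i : Fin ℓ, Fin (nn i),
        βt p = ∑ ν : Fin (nn p.1), β ⟨p.1, ν⟩ * algebraMap K F (((T p.1)⁻¹).transpose ν p.2)) →
      (∀ (j : Fin s) (p : Σ i : Fin ℓ, Fin (nn i)),
        Rt j p = ∑ ν : Fin (nn p.1), R j ⟨p.1, ν⟩ * algebraMap K F (((T p.1)⁻¹).transpose ν p.2)) →
      ∀ j : Fin s,
        (∀ (i : Fin ℓ) (μ : Fin (nn i)),
          rkqMat K (Matrix.of fun (r : Fin s) (ν : Fin (nn i)) => E r ⟨i, ν⟩) ≤ (μ : ℕ) →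
          Rt j ⟨i, μ⟩ = ∑ u : Fin k, M j u * opev σ (aa i) (βt ⟨i, μ⟩) (u : ℕ)) ∧
        ∀ v : Fin k → F,
          (∀ (i : Fin ℓ) (μ : Fin (nn i)),
            rkqMat K (Matrix.of fun (r : Fin s) (ν : Fin (nn i)) => E r ⟨i, ν⟩) ≤ (μ : ℕ) →
            ∑ u : Fin k, v u * opev σ (aa i) (βt ⟨i, μ⟩) (u : ℕ) = Rt j ⟨i, μ⟩) →
          v = M j :=
  LO_message_recovery_general σ hfix nn aa ha0 haconj β hβ hn hkn M E R hR ht htnk hrk h hh0 hker T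
    hT hTz

end Stmt19
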